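/- For positive integers 1 ≤ k ≤ n and 1 ≤ l ≤ m with l ≤ k and n−k ≤ m−l, let h_{k|n}(p) = Σ_{i=k}^{n} C(n,i) p^i (1−p)^{n−i} and h_{l|m}(p) = Σ_{i=l}^{m} C(m,i) p^i (1−p)^{m−i}, and define R_{k|n}(p) = (1−p)·h_{k|n}'(p)/(1−h_{k|n}(p)) and R_{l|m}(p) = (1−p)·h_{l|m}'(p)/(1−h_{l|m}(p)) for p∈(0,1). Then R_{k|n}(p)/R_{l|m}(p) is increasing in p∈(0,1). -/

import Mathlib

open Set

/-- Reliability (dual distortion) function of a `k`-out-of-`n` system with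
i.i.d. components: `h_{k|n}(p) = Σ_{i=k}^{n} C(n,i) pⁱ (1-p)^{n-i}`. -/
noncomputable def hkn (k n : ℕ) (p : ℝ) : ℝ :=
  ∑ i ∈ Finset.Icc k n, (n.choose i : ℝ) * p ^ i * (1 - p) ^ (n - i)

/-- `R_{k|n}(p) = (1-p) h_{k|n}'(p) / (1 - h_{k|n}(p))`. -/
noncomputable def Rkn (k n : ℕ) (p : ℝ) : ℝ :=
  (1 - p) * deriv (hkn k n) p / (1 - hkn k n p)

/-! ### Auxiliary combinatorial lemmas -/

lemma aux_choose_step (n m D : ℕ) (hD : n ≤ m + D) (i : ℕ) :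
    n.choose (i + D + 1) * m.choose i ≤ n.choose (i + D) * m.choose (i + 1) := by
  have h1 : n.choose (i + D + 1) * (i + D + 1) = n.choose (i + D) * (n - (i + D)) :=
    Nat.choose_succ_right_eq n (i + D)
  have h2 : m.choose (i + 1) * (i + 1) = m.choose i * (m - i) :=
    Nat.choose_succ_right_eq m i
  have key : (n - (i + D)) * (i + 1) ≤ (m - i) * (i + D + 1) :=
    Nat.mul_le_mul (by omega) (by omega)
  have main : n.choose (i + D + 1) * m.choose i * ((i + D + 1) * (i + 1))
      ≤ n.choose (i + D) * m.choose (i + 1) * ((i + D + 1) * (i + 1)) := by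
    calc n.choose (i + D + 1) * m.choose i * ((i + D + 1) * (i + 1))
        = (n.choose (i+D+1) * (i+D+1)) * m.choose i * (i+1) := by ring
      _ = (n.choose (i+D) * (n - (i+D))) * m.choose i * (i+1) := by rw [h1]
      _ = n.choose (i+D) * m.choose i * ((n - (i+D)) * (i+1)) := by ring
      _ ≤ n.choose (i+D) * m.choose i * ((m - i) * (i+D+1)) := Nat.mul_le_mul_left _ key
      _ = (n.choose (i+D)) * ((m.choose i * (m - i)) * (i+D+1)) := by ring
      _ = (n.choose (i+D)) * ((m.choose (i+1) * (i+1)) * (i+D+1)) := by rw [h2]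
      _ = n.choose (i+D) * m.choose (i+1) * ((i + D + 1) * (i+1)) := by ring
  exact Nat.le_of_mul_le_mul_right main (by positivity)

lemma aux_choose_chain (n m D : ℕ) (hD : n ≤ m + D) (i d : ℕ) :
    n.choose (i + D + d) * m.choose i ≤ n.choose (i + D) * m.choose (i + d) := by
  induction d with
  | zero => simp
  | succ d ih =>
    by_cases h0 : n < i + D + d
    · have hz : n.choose (i + D + (d+1)) = 0 := Nat.choose_eq_zero_of_lt (by omega)
      simp [hz]
    · push_neg at h0
      have hn : 0 < n.choose (i + D + d) := Nat.choose_pos h0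
      have hm : 0 < m.choose (i + d) := Nat.choose_pos (by omega)
      have step := aux_choose_step n m D hD (i + d)
      have e1 : i + d + D + 1 = i + D + (d + 1) := by omega
      have e2 : i + d + D = i + D + d := by omega
      rw [e1, e2] at step
      have e3 : i + d + 1 = i + (d + 1) := by omega
      rw [e3] at step
      have mul1 : (n.choose (i+D+(d+1)) * m.choose i) * (n.choose (i+D+d) * m.choose (i+d))
          ≤ (n.choose (i+D) * m.choose (i+(d+1))) * (n.choose (i+D+d) * m.choose (i+d)) := by
        calc (n.choose (i+D+(d+1)) * m.choose i) * (n.choose (i+D+d) * m.choose (i+d))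
            = (n.choose (i+D+(d+1)) * m.choose (i+d)) * (n.choose (i+D+d) * m.choose i) := by ring
          _ ≤ (n.choose (i+D+d) * m.choose (i+(d+1))) * (n.choose (i+D) * m.choose (i+d)) :=
              Nat.mul_le_mul step ih
          _ = (n.choose (i+D) * m.choose (i+(d+1))) * (n.choose (i+D+d) * m.choose (i+d)) := by ring
      exact Nat.le_of_mul_le_mul_right mul1 (by positivity)

/-! ### The antisymmetrization inequality -/

lemma aux_sum_mul_sum_le (s : Finset ℕ) (E F : ℕ → ℝ)
    (hEF : ∀ v u, v ≤ u → E v * F u ≤ E u * F v)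
    (x y : ℝ) (hx : 0 < x) (hxy : x ≤ y) :
    (∑ u ∈ s, E u * x ^ u) * (∑ v ∈ s, F v * y ^ v)
      ≤ (∑ u ∈ s, E u * y ^ u) * (∑ v ∈ s, F v * x ^ v) := by
  have aux : ∀ u v : ℕ, v ≤ u →
      0 ≤ (E u * F v - E v * F u) * (y ^ u * x ^ v - x ^ u * y ^ v) := by
    intro u v h
    have h1 : 0 ≤ E u * F v - E v * F u := by linarith [hEF v u h]
    have h2 : 0 ≤ y ^ u * x ^ v - x ^ u * y ^ v := by
      have e1 : x ^ u = x ^ v * x ^ (u - v) := by rw [← pow_add]; congr 1; omega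
      have e2 : y ^ u = y ^ v * y ^ (u - v) := by rw [← pow_add]; congr 1; omega
      have hp : x ^ (u - v) ≤ y ^ (u - v) := pow_le_pow_left₀ hx.le hxy _
      have hxv : (0:ℝ) < x ^ v := pow_pos hx v
      have hyv : (0:ℝ) < y ^ v := pow_pos (lt_of_lt_of_le hx hxy) v
      have hh := mul_nonneg (mul_nonneg (sub_nonneg.2 hp) hxv.le) hyv.le
      rw [e1, e2]; nlinarith
    exact mul_nonneg h1 h2
  have key : 0 ≤ ∑ u ∈ s, ∑ v ∈ s,
      (E u * F v - E v * F u) * (y ^ u * x ^ v - x ^ u * y ^ v) := by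
    apply Finset.sum_nonneg; intro u _
    apply Finset.sum_nonneg; intro v _
    rcases le_total v u with h | h
    · exact aux u v h
    · have hq := aux v u h
      have e : (E u * F v - E v * F u) * (y ^ u * x ^ v - x ^ u * y ^ v)
          = (E v * F u - E u * F v) * (y ^ v * x ^ u - x ^ v * y ^ u) := by ring
      rw [e]; exact hq
  have hsum : ∑ u ∈ s, ∑ v ∈ s, (E u * F v - E v * F u) * (y ^ u * x ^ v - x ^ u * y ^ v)
      = ((∑ u ∈ s, E u * y ^ u) * (∑ v ∈ s, F v * x ^ v)
          - (∑ u ∈ s, E u * x ^ u) * (∑ v ∈ s, F v * y ^ v))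
        - ((∑ u ∈ s, F u * y ^ u) * (∑ v ∈ s, E v * x ^ v)
          - (∑ u ∈ s, F u * x ^ u) * (∑ v ∈ s, E v * y ^ v)) := by
    simp only [Finset.sum_mul_sum, ← Finset.sum_sub_distrib]
    exact Finset.sum_congr rfl fun u _ => Finset.sum_congr rfl fun v _ => by ring
  have swap1 : (∑ u ∈ s, F u * y ^ u) * (∑ v ∈ s, E v * x ^ v)
      = (∑ u ∈ s, E u * x ^ u) * (∑ v ∈ s, F v * y ^ v) := by ring
  have swap2 : (∑ u ∈ s, F u * x ^ u) * (∑ v ∈ s, E v * y ^ v)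
      = (∑ u ∈ s, E u * y ^ u) * (∑ v ∈ s, F v * x ^ v) := by ring
  rw [hsum, swap1, swap2] at key
  linarith

/-! ### Shifted coefficient function -/

noncomputable def Ef (m D : ℕ) : ℕ → ℝ := fun u => if D ≤ u then (m.choose (u - D) : ℝ) else 0

lemma Ef_sum (m D l k : ℕ) (hDk : D + l = k) (t : ℝ) :
    ∑ u ∈ Finset.range k, Ef m D u * t ^ u
      = t ^ D * ∑ i ∈ Finset.range l, (m.choose i : ℝ) * t ^ i := by
  have hsplit := Finset.sum_range_add_sum_Ico (fun u => Ef m D u * t ^ u)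
    (show D ≤ k by omega)
  have h0 : ∑ u ∈ Finset.range D, Ef m D u * t ^ u = 0 :=
    Finset.sum_eq_zero fun u hu => by
      simp only [Finset.mem_range] at hu
      simp [Ef, Nat.not_le.2 hu]
  have h1 : ∑ u ∈ Finset.Ico D k, Ef m D u * t ^ u
      = t ^ D * ∑ i ∈ Finset.range l, (m.choose i : ℝ) * t ^ i := by
    rw [Finset.sum_Ico_eq_sum_range, show k - D = l by omega, Finset.mul_sum]
    refine Finset.sum_congr rfl fun i _ => ?_
    simp only [Ef, if_pos (Nat.le_add_right D i), Nat.add_sub_cancel_left, pow_add]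
    ring
  rw [← hsplit, h0, zero_add, h1]

/-! ### Complement and derivative of `hkn` -/

lemma one_sub_hkn (k n : ℕ) (hkn' : k ≤ n) (p : ℝ) :
    1 - hkn k n p = ∑ i ∈ Finset.range k, (n.choose i : ℝ) * p ^ i * (1 - p) ^ (n - i) := by
  have h1 : (1:ℝ) = ∑ i ∈ Finset.range (n+1), (n.choose i : ℝ) * p ^ i * (1 - p) ^ (n - i) := by
    have h := add_pow p (1-p) n
    rw [show p + (1-p) = (1:ℝ) by ring, one_pow] at h
    exact h.trans (Finset.sum_congr rfl fun i _ => by ring)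
  have h2 := Finset.sum_range_add_sum_Ico
    (fun i => (n.choose i : ℝ) * p ^ i * (1 - p) ^ (n - i)) (show k ≤ n+1 by omega)
  rw [Finset.Ico_add_one_right_eq_Icc] at h2
  have h3 : hkn k n p = ∑ i ∈ Finset.Icc k n, (n.choose i : ℝ) * p ^ i * (1 - p) ^ (n - i) := rfl
  linarith [h2, h1]

lemma hasDerivAt_hkn (k n : ℕ) (hk1 : 1 ≤ k) (hkn' : k ≤ n) (p : ℝ) :
    HasDerivAt (hkn k n) ((k : ℝ) * n.choose k * p ^ (k-1) * (1-p) ^ (n-k)) p := by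
  classical
  set f : ℕ → ℝ := fun i => (n.choose i : ℝ) * i * p^(i-1) * (1-p)^(n-i) with hf
  have hterm : ∀ i ∈ Finset.Icc k n,
      HasDerivAt (fun q : ℝ => (n.choose i : ℝ) * q ^ i * (1-q) ^ (n-i)) (f i - f (i+1)) p := by
    intro i hi
    simp only [Finset.mem_Icc] at hi
    have h2 : HasDerivAt (fun q : ℝ => (1-q)^(n-i)) (((n-i : ℕ) : ℝ) * (1-p)^(n-i-1) * (-1)) p :=
      ((hasDerivAt_id p).const_sub 1).pow (n-i)
    have h3 := (hasDerivAt_pow i p).mul h2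
    have h4 : HasDerivAt (fun q : ℝ => (n.choose i : ℝ) * q ^ i * (1-q) ^ (n-i))
        ((n.choose i : ℝ) * ((↑i * p ^ (i-1)) * (1-p)^(n-i)
          + p ^ i * (((n-i : ℕ) : ℝ) * (1-p)^(n-i-1) * (-1)))) p := by
      simpa [mul_assoc] using h3.const_mul ((n.choose i : ℝ))
    have cast_id : (n.choose (i+1) : ℝ) * ((i:ℝ)+1) = (n.choose i : ℝ) * ((n-i : ℕ) : ℝ) := by
      exact_mod_cast Nat.choose_succ_right_eq n i
    have hfi1 : f (i+1) = (n.choose i : ℝ) * ((n-i : ℕ) : ℝ) * p^i * (1-p)^(n-i-1) := by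
      simp only [hf]
      rw [show n - (i+1) = n - i - 1 by omega, show (i+1) - 1 = i from rfl,
        show ((i+1:ℕ):ℝ) = (i:ℝ)+1 by push_cast; ring]
      linear_combination (p^i * (1-p)^(n-i-1)) * cast_id
    have heq : f i - f (i+1) = (n.choose i : ℝ) * ((↑i * p ^ (i-1)) * (1-p)^(n-i)
          + p ^ i * (((n-i : ℕ) : ℝ) * (1-p)^(n-i-1) * (-1))) := by
      rw [hfi1]; simp only [hf]; ring
    rw [heq]
    exact h4
  have hs := HasDerivAt.fun_sum hterm
  have tel : ∑ i ∈ Finset.Icc k n, (f i - f (i+1)) = f k - f (n+1) := by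
    calc ∑ i ∈ Finset.Icc k n, (f i - f (i+1))
        = ∑ j ∈ Finset.range (n+1-k), (f (k+j) - f (k+j+1)) := by
          rw [← Finset.Ico_add_one_right_eq_Icc, Finset.sum_Ico_eq_sum_range]
      _ = f (k+0) - f (k+(n+1-k)) := Finset.sum_range_sub' (fun j => f (k+j)) (n+1-k)
      _ = f k - f (n+1) := by rw [Nat.add_zero, show k+(n+1-k) = n+1 by omega]
  have fn1 : f (n+1) = 0 := by
    simp [hf, Nat.choose_eq_zero_of_lt (Nat.lt_succ_self n)]
  have fk : f k = (k:ℝ) * n.choose k * p^(k-1) * (1-p)^(n-k) := by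
    simp only [hf]; ring
  rw [tel, fn1, fk, sub_zero] at hs
  exact hs

lemma Rkn_eq (k n : ℕ) (hk1 : 1 ≤ k) (hkn' : k ≤ n) {p : ℝ} (hp : p ∈ Set.Ioo (0:ℝ) 1) :
    Rkn k n p = ((k : ℝ) * n.choose k) * (p/(1-p))^(k-1)
      / (∑ j ∈ Finset.range k, (n.choose j : ℝ) * (p/(1-p))^j) := by
  obtain ⟨hp0, hp1⟩ := hp
  have h1p : (0:ℝ) < 1 - p := by linarith
  have hderiv : deriv (hkn k n) p = (k : ℝ) * n.choose k * p ^ (k-1) * (1-p) ^ (n-k) :=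
    (hasDerivAt_hkn k n hk1 hkn' p).deriv
  have hA : ∀ i, i ≤ n → (1-p)^n * ((n.choose i:ℝ) * (p/(1-p))^i)
      = (n.choose i : ℝ) * p ^ i * (1-p) ^ (n-i) := by
    intro i hi
    rw [div_pow, show (1-p:ℝ)^n = (1-p)^(n-i) * (1-p)^i by rw [← pow_add]; congr 1; omega]
    field_simp
  have hden : 1 - hkn k n p = (1-p)^n * ∑ j ∈ Finset.range k, (n.choose j : ℝ) * (p/(1-p))^j := by
    rw [one_sub_hkn k n hkn' p, Finset.mul_sum]
    exact Finset.sum_congr rfl fun i hi => (hA i (by simp at hi; omega)).symm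
  have hnum : (1 - p) * deriv (hkn k n) p
      = (1-p)^n * (((k : ℝ) * n.choose k) * (p/(1-p))^(k-1)) := by
    rw [hderiv, div_pow,
      show (1-p:ℝ)^n = (1-p)^(n-k) * (1-p) * (1-p)^(k-1) by
        rw [← pow_succ, ← pow_add]; congr 1; omega]
    field_simp
  rw [Rkn, hnum, hden, mul_div_mul_left]
  positivity

/-- Lemma 2.3 (i): `R_{k|n}(p) / R_{l|m}(p)` is increasing on `(0,1)` for
`l ≤ k` and `n - k ≤ m - l`. -/
theorem Rkn_ratio_monotone
    (k n l m : ℕ)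
    (hk1 : 1 ≤ k) (hkn' : k ≤ n) (hl1 : 1 ≤ l) (hlm : l ≤ m)
    (hlk : l ≤ k) (hnk : n - k ≤ m - l) :
    MonotoneOn (fun p => Rkn k n p / Rkn l m p) (Set.Ioo 0 1) := by
  have hD : n ≤ m + (k - l) := by omega
  set D := k - l with hDdef
  set F : ℕ → ℝ := fun v => (n.choose v : ℝ) with hF
  -- key coefficient inequality
  have hEF : ∀ v u : ℕ, v ≤ u → Ef m D v * F u ≤ Ef m D u * F v := by
    intro v u h
    by_cases hv : D ≤ v
    · simp only [Ef, hF, if_pos hv, if_pos (le_trans hv h)]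
      have hc := aux_choose_chain n m D hD (v - D) (u - v)
      rw [show v - D + D + (u - v) = u by omega, show v - D + D = v by omega,
        show v - D + (u - v) = u - D by omega] at hc
      have h2 : m.choose (v - D) * n.choose u ≤ m.choose (u - D) * n.choose v := by
        rw [Nat.mul_comm, Nat.mul_comm (m.choose (u - D))]; exact hc
      exact_mod_cast h2
    · simp only [Ef, hF, if_neg hv, zero_mul]
      positivity
  -- positivity of denominators
  have hApos : ∀ t : ℝ, 0 < t → 0 < ∑ j ∈ Finset.range k, (n.choose j : ℝ) * t ^ j := by
    intro t ht
    apply Finset.sum_pos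
    · intro j hj
      simp only [Finset.mem_range] at hj
      have : 0 < n.choose j := Nat.choose_pos (by omega)
      positivity
    · exact Finset.nonempty_range_iff.2 (by omega)
  have hBpos : ∀ t : ℝ, 0 < t → 0 < ∑ i ∈ Finset.range l, (m.choose i : ℝ) * t ^ i := by
    intro t ht
    apply Finset.sum_pos
    · intro i hi
      simp only [Finset.mem_range] at hi
      have : 0 < m.choose i := Nat.choose_pos (by omega)
      positivity
    · exact Finset.nonempty_range_iff.2 (by omega)
  have hKpos : (0:ℝ) < (k : ℝ) * n.choose k := by
    have : 0 < n.choose k := Nat.choose_pos hkn'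
    positivity
  have hLpos : (0:ℝ) < (l : ℝ) * m.choose l := by
    have : 0 < m.choose l := Nat.choose_pos hlm
    positivity
  -- ratio rewrite
  have ratio_eq : ∀ t : ℝ, 0 < t →
      (((k : ℝ) * n.choose k) * t^(k-1) / (∑ j ∈ Finset.range k, (n.choose j : ℝ) * t^j))
        / (((l : ℝ) * m.choose l) * t^(l-1) / (∑ i ∈ Finset.range l, (m.choose i : ℝ) * t^i))
      = (((k : ℝ) * n.choose k) / ((l : ℝ) * m.choose l))
        * ((∑ u ∈ Finset.range k, Ef m D u * t ^ u)
            / (∑ j ∈ Finset.range k, (n.choose j : ℝ) * t^j)) := by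
    intro t ht
    rw [Ef_sum m D l k (by omega) t,
      show t^(k-1) = t^(l-1) * t^D by rw [← pow_add]; congr 1; omega]
    have hA := hApos t ht
    have hB := hBpos t ht
    field_simp
  -- main monotonicity argument
  intro p hp q hq hpq
  obtain ⟨hp0, hp1⟩ := hp
  obtain ⟨hq0, hq1⟩ := hq
  have h1p : (0:ℝ) < 1 - p := by linarith
  have h1q : (0:ℝ) < 1 - q := by linarith
  set x := p / (1 - p) with hxdef
  set y := q / (1 - q) with hydef
  have hx : 0 < x := div_pos hp0 h1p
  have hy : 0 < y := div_pos hq0 h1q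
  have hxy : x ≤ y := by
    rw [hxdef, hydef, div_le_div_iff₀ h1p h1q]
    nlinarith
  show Rkn k n p / Rkn l m p ≤ Rkn k n q / Rkn l m q
  rw [Rkn_eq k n hk1 hkn' ⟨hp0, hp1⟩, Rkn_eq l m hl1 hlm ⟨hp0, hp1⟩,
    Rkn_eq k n hk1 hkn' ⟨hq0, hq1⟩, Rkn_eq l m hl1 hlm ⟨hq0, hq1⟩,
    ratio_eq x hx, ratio_eq y hy]
  apply mul_le_mul_of_nonneg_left _ (le_of_lt (div_pos hKpos hLpos))
  rw [div_le_div_iff₀ (hApos x hx) (hApos y hy)]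
  have := aux_sum_mul_sum_le (Finset.range k) (Ef m D) F hEF x y hx hxy
  simpa [hF] using this
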